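/- The Flory–Huggins entropy S(u₁,u₂) = (u₁/M₀)·ln(αu₁/M₀) + (u₂/N₀)·ln(βu₂/N₀) + (1-u₁-u₂)·ln(1-u₁-u₂) is strictly convex on the Gibbs triangle G = {(u₁,u₂) : u₁ > 0, u₂ > 0, u₁+u₂ < 1}, for any positive constants M₀, N₀, α, β. -/
import Mathlib

theorem S_strictConvex (M₀ N₀ α β : ℝ) (hM : 0 < M₀) (hN : 0 < N₀)
    (hα : 0 < α) (hβ : 0 < β) :
    StrictConvexOn ℝ {p : ℝ × ℝ | 0 < p.1 ∧ 0 < p.2 ∧ p.1 + p.2 < 1}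
      (fun p : ℝ × ℝ =>
        p.1 / M₀ * Real.log (α * p.1 / M₀) + p.2 / N₀ * Real.log (β * p.2 / N₀)
          + (1 - p.1 - p.2) * Real.log (1 - p.1 - p.2)) := by
  set g : ℝ → ℝ := fun x => x * Real.log x with hgdef
  have hg : StrictConvexOn ℝ (Set.Ici (0:ℝ)) g := Real.strictConvexOn_mul_log
  have key : ∀ (c M x : ℝ), 0 < c → 0 < M → 0 < x →
      x / M * Real.log (c * x / M) = (1/M) * g x + (Real.log (c/M) / M) * x := by
    intro c M x hc hM hx
    have h : c * x / M = (c/M) * x := by ring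
    rw [h, Real.log_mul (by positivity) hx.ne']
    simp only [hgdef]; ring
  constructor
  · intro p hp q hq a b ha hb hab
    obtain ⟨hp1, hp2, hp3⟩ := hp
    obtain ⟨hq1, hq2, hq3⟩ := hq
    have hmem : a • p + b • q = (a*p.1+b*q.1, a*p.2+b*q.2) := rfl
    rw [hmem]
    rcases ha.eq_or_lt with rfl | ha'
    · simp only [zero_add] at hab; subst hab
      refine ⟨by simpa using hq1, by simpa using hq2, by simpa using hq3⟩
    · refine ⟨?_, ?_, ?_⟩
      · have h1 : 0 < a * p.1 := mul_pos ha' hp1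
        have h2 : 0 ≤ b * q.1 := mul_nonneg hb hq1.le
        simpa using by linarith
      · have h1 : 0 < a * p.2 := mul_pos ha' hp2
        have h2 : 0 ≤ b * q.2 := mul_nonneg hb hq2.le
        simpa using by linarith
      · have h1 : a * (p.1 + p.2) < a * 1 := by
          exact mul_lt_mul_of_pos_left hp3 ha'
        have h2 : b * (q.1 + q.2) ≤ b * 1 := by
          exact mul_le_mul_of_nonneg_left hq3.le hb
        simp only [Set.mem_setOf_eq]
        nlinarith
  · intro p hp q hq hpq a b ha hb hab
    obtain ⟨hp1, hp2, hp3⟩ := hp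
    obtain ⟨hq1, hq2, hq3⟩ := hq
    have hmem : a • p + b • q = (a*p.1+b*q.1, a*p.2+b*q.2) := rfl
    rw [hmem]
    have hA : 0 < a*p.1+b*q.1 := by nlinarith
    have hB : 0 < a*p.2+b*q.2 := by nlinarith
    have hC : (0:ℝ) < 1 - (a*p.1+b*q.1) - (a*p.2+b*q.2) := by nlinarith
    have comb : ∀ x y : ℝ, 0 ≤ x → 0 ≤ y →
        g (a*x+b*y) ≤ a * g x + b * g y := by
      intro x y hx hy
      have := hg.convexOn.2 (Set.mem_Ici.2 hx) (Set.mem_Ici.2 hy) ha.le hb.le hab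
      simpa [smul_eq_mul] using this
    have combs : ∀ x y : ℝ, 0 ≤ x → 0 ≤ y → x ≠ y →
        g (a*x+b*y) < a * g x + b * g y := by
      intro x y hx hy hxy
      have := hg.2 (Set.mem_Ici.2 hx) (Set.mem_Ici.2 hy) hxy ha hb hab
      simpa [smul_eq_mul] using this
    have e3 : a*(1-p.1-p.2)+b*(1-q.1-q.2)
        = 1 - (a*p.1+b*q.1) - (a*p.2+b*q.2) := by linear_combination hab
    have h3 : g (1 - (a*p.1+b*q.1) - (a*p.2+b*q.2))
        ≤ a * g (1-p.1-p.2) + b * g (1-q.1-q.2) := by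
      rw [← e3]; exact comb _ _ (by linarith) (by linarith)
    have c1 : (0:ℝ) < 1/M₀ := by positivity
    have c2 : (0:ℝ) < 1/N₀ := by positivity
    simp only [smul_eq_mul, Set.mem_setOf_eq]
    rw [key α M₀ _ hα hM hA, key β N₀ _ hβ hN hB,
        key α M₀ _ hα hM hp1, key β N₀ _ hβ hN hp2,
        key α M₀ _ hα hM hq1, key β N₀ _ hβ hN hq2]
    have hd : p.1 ≠ q.1 ∨ p.2 ≠ q.2 := by
      by_contra h
      push_neg at h
      exact hpq (Prod.ext h.1 h.2)
    rcases hd with hd | hd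
    · have h1 := combs p.1 q.1 hp1.le hq1.le hd
      have h2 := comb p.2 q.2 hp2.le hq2.le
      have h1' := mul_lt_mul_of_pos_left h1 c1
      have h2' := mul_le_mul_of_nonneg_left h2 c2.le
      simp only [hgdef] at h1' h2' h3 ⊢
      linarith [h1', h2', h3]
    · have h1 := comb p.1 q.1 hp1.le hq1.le
      have h2 := combs p.2 q.2 hp2.le hq2.le hd
      have h1' := mul_le_mul_of_nonneg_left h1 c1.le
      have h2' := mul_lt_mul_of_pos_left h2 c2
      simp only [hgdef] at h1' h2' h3 ⊢
      linarith [h1', h2', h3]
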